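/- arXiv:1509.00758 — 8 statements merged into one kernel-verified Lean document; each statement's English description precedes it below -/
import Mathlib

section
/- For every integer n ≥ 1, the path P_n with n+1 vertices admits a fuzzy magic labeling; that is, there exist a real number m with 0 < m ≤ 1 and functions α : {1, …, n+1} → ℝ and β : {1, …, n} → ℝ such that all values α(1), …, α(n+1), β(1), …, β(n) lie in the half-open interval (0, 1], these 2n+1 values are pairwise distinct, β(j) < α(j) + α(j+1) for every 1 ≤ j ≤ n, and α(j) + β(j) + α(j+1) = m for every 1 ≤ j ≤ n. -/
/-!
Put `ε = 1 / (8 (n + 1))`, vertex labels `α k = 1/2 - k ε` and edge labels `β j = (2 j + 1) ε`.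
Then `α j + β j + α (j + 1) = 1` for every `j`, both label families are strictly monotone, and
on the path the vertex labels lie in `[3/8, 1/2]` while the edge labels lie in `(0, 1/4)`, which
separates the two families and gives `β j < α j + α (j + 1)`.
-/

namespace FuzzyMagicPath

noncomputable def vertexLabel (n k : ℕ) : ℝ := 1 / 2 - k / (8 * (n + 1))

noncomputable def edgeLabel (n j : ℕ) : ℝ := (2 * j + 1) / (8 * (n + 1))

variable (n : ℕ)

theorem vertexLabel_add_edgeLabel_add_vertexLabel (j : ℕ) :
    vertexLabel n j + edgeLabel n j + vertexLabel n (j + 1) = 1 := by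
  unfold vertexLabel edgeLabel
  push_cast
  field_simp
  ring

theorem vertexLabel_strictAnti : StrictAnti (vertexLabel n) := by
  intro k k' hkk'
  unfold vertexLabel
  gcongr

theorem edgeLabel_strictMono : StrictMono (edgeLabel n) := by
  intro j j' hjj'
  unfold edgeLabel
  gcongr

theorem vertexLabel_mem_Icc {k : ℕ} (hk : k ≤ n + 1) :
    vertexLabel n k ∈ Set.Icc (3 / 8) (1 / 2) := by
  have hk' : (k : ℝ) ≤ n + 1 := by exact_mod_cast hk
  have hdiv : (k : ℝ) / (8 * (n + 1)) ≤ 1 / 8 := by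
    rw [div_le_iff₀ (by positivity)]
    linarith
  unfold vertexLabel
  constructor
  · linarith
  · linarith [show (0 : ℝ) ≤ k / (8 * (n + 1)) by positivity]

theorem edgeLabel_mem_Ioo {j : ℕ} (hj : j ≤ n) : edgeLabel n j ∈ Set.Ioo 0 (1 / 4) := by
  have hj' : (j : ℝ) ≤ n := by exact_mod_cast hj
  unfold edgeLabel
  constructor
  · positivity
  · rw [div_lt_iff₀ (by positivity)]
    linarith

end FuzzyMagicPath

open FuzzyMagicPath in
theorem path_is_fuzzy_magic_general (n : ℕ) :
    ∃ (m : ℝ) (α β : ℕ → ℝ),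
      0 < m ∧ m ≤ 1 ∧
      (∀ k, 1 ≤ k → k ≤ n + 1 → 0 < α k ∧ α k ≤ 1) ∧
      (∀ j, 1 ≤ j → j ≤ n → 0 < β j ∧ β j ≤ 1) ∧
      (∀ k k', 1 ≤ k → k ≤ n + 1 → 1 ≤ k' → k' ≤ n + 1 → k ≠ k' → α k ≠ α k') ∧
      (∀ j j', 1 ≤ j → j ≤ n → 1 ≤ j' → j' ≤ n → j ≠ j' → β j ≠ β j') ∧
      (∀ k j, 1 ≤ k → k ≤ n + 1 → 1 ≤ j → j ≤ n → α k ≠ β j) ∧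
      (∀ j, 1 ≤ j → j ≤ n → β j < α j + α (j + 1)) ∧
      (∀ j, 1 ≤ j → j ≤ n → α j + β j + α (j + 1) = m) := by
  refine ⟨1, vertexLabel n, edgeLabel n, one_pos, le_rfl, ?_, ?_, ?_, ?_, ?_, ?_, ?_⟩
  · intro k _ hk
    have := vertexLabel_mem_Icc n hk
    exact ⟨by linarith [this.1], by linarith [this.2]⟩
  · intro j _ hj
    have := edgeLabel_mem_Ioo n hj
    exact ⟨this.1, by linarith [this.2]⟩
  · exact fun k k' _ _ _ _ hkk' => (vertexLabel_strictAnti n).injective.ne hkk'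
  · exact fun j j' _ _ _ _ hjj' => (edgeLabel_strictMono n).injective.ne hjj'
  · intro k j _ hk _ hj
    linarith [(vertexLabel_mem_Icc n hk).1, (edgeLabel_mem_Ioo n hj).2]
  · intro j _ hj
    linarith [(edgeLabel_mem_Ioo n hj).2, (vertexLabel_mem_Icc n (k := j) (by omega)).1,
      (vertexLabel_mem_Icc n (k := j + 1) (by omega)).1]
  · exact fun j _ _ => vertexLabel_add_edgeLabel_add_vertexLabel n j

/-- For every integer `n ≥ 1`, the path `P_n` with `n+1` vertices `v_1, …, v_{n+1}` and
edges `e_j = v_j v_{j+1}` (`1 ≤ j ≤ n`) admits a fuzzy magic labeling: there exist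
`m ∈ (0,1]`, vertex labels `α` and edge labels `β` taking values in `(0,1]`, all `2n+1`
values pairwise distinct, with `β j < α j + α (j+1)` and `α j + β j + α (j+1) = m`
for every edge. -/
theorem path_is_fuzzy_magic (n : ℕ) (hn : 1 ≤ n) :
    ∃ (m : ℝ) (α β : ℕ → ℝ),
      0 < m ∧ m ≤ 1 ∧
      (∀ k, 1 ≤ k → k ≤ n + 1 → 0 < α k ∧ α k ≤ 1) ∧
      (∀ j, 1 ≤ j → j ≤ n → 0 < β j ∧ β j ≤ 1) ∧
      (∀ k k', 1 ≤ k → k ≤ n + 1 → 1 ≤ k' → k' ≤ n + 1 → k ≠ k' → α k ≠ α k') ∧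
      (∀ j j', 1 ≤ j → j ≤ n → 1 ≤ j' → j' ≤ n → j ≠ j' → β j ≠ β j') ∧
      (∀ k j, 1 ≤ k → k ≤ n + 1 → 1 ≤ j → j ≤ n → α k ≠ β j) ∧
      (∀ j, 1 ≤ j → j ≤ n → β j < α j + α (j + 1)) ∧
      (∀ j, 1 ≤ j → j ≤ n → α j + β j + α (j + 1) = m) :=
  path_is_fuzzy_magic_general n
end

section
/- For every integer n ≥ 2, the star S_{1,n} admits a fuzzy magic labeling; that is, there exist a real number m with 0 < m ≤ 1, a value α_v ∈ (0,1] for the center, values α_1, …, α_n ∈ (0,1] for the leaves, and values β_1, …, β_n ∈ (0,1] for the edges, such that all 2n+1 values are pairwise distinct, β_i < α_v + α_i for every 1 ≤ i ≤ n, and α_v + β_i + α_i = m for every 1 ≤ i ≤ n. -/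
/-- For every integer `n ≥ 2`, the star `S_{1,n}` with center `v`, leaves `u_1, …, u_n`
and edges `v u_i` (`1 ≤ i ≤ n`) admits a fuzzy magic labeling: there exist `m ∈ (0,1]`,
a center value `αv ∈ (0,1]`, leaf values `α i ∈ (0,1]`, and edge values `β i ∈ (0,1]`,
all `2n+1` values pairwise distinct, with `β i < αv + α i` and `αv + β i + α i = m`
for every `1 ≤ i ≤ n`. -/
theorem star_is_fuzzy_magic (n : ℕ) (hn : 2 ≤ n) :
    ∃ (m : ℝ) (αv : ℝ) (α β : ℕ → ℝ),
      0 < m ∧ m ≤ 1 ∧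
      (0 < αv ∧ αv ≤ 1) ∧
      (∀ i, 1 ≤ i → i ≤ n → 0 < α i ∧ α i ≤ 1) ∧
      (∀ i, 1 ≤ i → i ≤ n → 0 < β i ∧ β i ≤ 1) ∧
      (∀ i, 1 ≤ i → i ≤ n → αv ≠ α i) ∧
      (∀ i, 1 ≤ i → i ≤ n → αv ≠ β i) ∧
      (∀ i i', 1 ≤ i → i ≤ n → 1 ≤ i' → i' ≤ n → i ≠ i' → α i ≠ α i') ∧
      (∀ i i', 1 ≤ i → i ≤ n → 1 ≤ i' → i' ≤ n → i ≠ i' → β i ≠ β i') ∧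
      (∀ i i', 1 ≤ i → i ≤ n → 1 ≤ i' → i' ≤ n → α i ≠ β i') ∧
      (∀ i, 1 ≤ i → i ≤ n → β i < αv + α i) ∧
      (∀ i, 1 ≤ i → i ≤ n → αv + β i + α i = m) := by
  have hn0 : (0 : ℝ) < n := by positivity
  refine ⟨1, 1/2, fun i => (i : ℝ) / (5 * n), fun i => 1/2 - (i : ℝ) / (5 * n),
    ?_, ?_, ?_, ?_, ?_, ?_, ?_, ?_, ?_, ?_, ?_, ?_⟩
  · norm_num
  · norm_num
  · norm_num
  · intro i h1 h2
    have hi1 : (1 : ℝ) ≤ i := by exact_mod_cast h1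
    have hin : (i : ℝ) ≤ n := by exact_mod_cast h2
    constructor
    · positivity
    · rw [div_le_one (by positivity)]
      nlinarith
  · intro i h1 h2
    have hi1 : (1 : ℝ) ≤ i := by exact_mod_cast h1
    have hin : (i : ℝ) ≤ n := by exact_mod_cast h2
    constructor
    · have : (i : ℝ) / (5 * n) ≤ 1/5 := by
        rw [div_le_iff₀ (by positivity)]; nlinarith
      linarith
    · have : (0 : ℝ) < (i : ℝ) / (5 * n) := by positivity
      linarith
  · intro i h1 h2
    have hi1 : (1 : ℝ) ≤ i := by exact_mod_cast h1
    have hin : (i : ℝ) ≤ n := by exact_mod_cast h2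
    have : (i : ℝ) / (5 * n) ≤ 1/5 := by
      rw [div_le_iff₀ (by positivity)]; nlinarith
    intro h; linarith [h.symm.le]
  · intro i h1 h2
    have hi1 : (1 : ℝ) ≤ i := by exact_mod_cast h1
    have : (0 : ℝ) < (i : ℝ) / (5 * n) := by positivity
    intro h; linarith [h.le]
  · intro i i' h1 h2 h1' h2' hne h
    have h' := h
    have : (i : ℝ) = i' := by
      field_simp at h'
      exact_mod_cast h'
    exact hne (by exact_mod_cast this)
  · intro i i' h1 h2 h1' h2' hne h
    have h' : (i : ℝ) / (5 * n) = (i' : ℝ) / (5 * n) := by linarith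
    have : (i : ℝ) = i' := by
      field_simp at h'
      exact_mod_cast h'
    exact hne (by exact_mod_cast this)
  · intro i i' h1 h2 h1' h2' h
    have hi1 : (1 : ℝ) ≤ i := by exact_mod_cast h1
    have hin : (i : ℝ) ≤ n := by exact_mod_cast h2
    have hi1' : (1 : ℝ) ≤ i' := by exact_mod_cast h1'
    have hin' : (i' : ℝ) ≤ n := by exact_mod_cast h2'
    have ha : (i : ℝ) / (5 * n) ≤ 1/5 := by
      rw [div_le_iff₀ (by positivity)]; nlinarith
    have hb : (i' : ℝ) / (5 * n) ≤ 1/5 := by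
      rw [div_le_iff₀ (by positivity)]; nlinarith
    linarith [h.le]
  · intro i h1 h2
    have hi1 : (1 : ℝ) ≤ i := by exact_mod_cast h1
    have : (0 : ℝ) < (i : ℝ) / (5 * n) := by positivity
    linarith
  · intro i h1 h2; ring
end

section
/- For every odd integer n ≥ 3, the cycle C_n admits a fuzzy magic labeling; that is, there exist a real number m with 0 < m ≤ 1 and functions α : {1, …, n} → ℝ and β : {1, …, n} → ℝ such that all values α(1), …, α(n), β(1), …, β(n) lie in (0, 1], these 2n values are pairwise distinct, β(j) < α(j) + α(j+1) for every 1 ≤ j ≤ n−1 and β(n) < α(n) + α(1), and α(j) + β(j) + α(j+1) = m for every 1 ≤ j ≤ n−1 as well as α(n) + β(n) + α(1) = m. -/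
/-!
Clearing the denominator `16 n`, it suffices to label `C_n` by positive integers at most `16 n`
with integer magic constant: take `4n + 2k` on `v_k`, and on each edge the magic constant `12n + 1`
minus its two endpoint labels. Vertex labels are even and edge labels odd; the edges of the path
`v_1 ⋯ v_n` get labels `≡ 3 (mod 4)`, while the closing edge gets `2n - 1 ≡ 1 (mod 4)` as `n` is odd.
-/

/-- The conditions of a fuzzy magic labeling of `C_n`, with `top` in place of the bound `1`, so that
integer labelings can be built first and rescaled by `IsFuzzyMagicCycleLabeling.map`. -/
def IsFuzzyMagicCycleLabeling {R : Type*} [Zero R] [Add R] [LT R] [LE R]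
    (n : ℕ) (top m : R) (α β : ℕ → R) : Prop :=
  0 < m ∧ m ≤ top ∧
    (∀ k, 1 ≤ k → k ≤ n → 0 < α k ∧ α k ≤ top) ∧
    (∀ j, 1 ≤ j → j ≤ n → 0 < β j ∧ β j ≤ top) ∧
    (∀ k k', 1 ≤ k → k ≤ n → 1 ≤ k' → k' ≤ n → k ≠ k' → α k ≠ α k') ∧
    (∀ j j', 1 ≤ j → j ≤ n → 1 ≤ j' → j' ≤ n → j ≠ j' → β j ≠ β j') ∧
    (∀ k j, 1 ≤ k → k ≤ n → 1 ≤ j → j ≤ n → α k ≠ β j) ∧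
    (∀ j, 1 ≤ j → j ≤ n - 1 → β j < α j + α (j + 1)) ∧
    (β n < α n + α 1) ∧
    (∀ j, 1 ≤ j → j ≤ n - 1 → α j + β j + α (j + 1) = m) ∧
    (α n + β n + α 1 = m)

theorem IsFuzzyMagicCycleLabeling.map {R S : Type*} [AddMonoid R] [LinearOrder R]
    [AddMonoid S] [Preorder S] {n : ℕ} {top m : R} {α β : ℕ → R}
    (h : IsFuzzyMagicCycleLabeling n top m α β) (f : R →+ S) (hf : StrictMono f) :
    IsFuzzyMagicCycleLabeling n (f top) (f m) (f ∘ α) (f ∘ β) := by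
  obtain ⟨hm, hmtop, hα, hβ, hαα, hββ, hαβ, hlt, hltn, hsum, hsumn⟩ := h
  have hpos {x : R} (hx : 0 < x) : 0 < f x := map_zero f ▸ hf hx
  refine ⟨hpos hm, hf.monotone hmtop, fun k hk hkn => ?_, fun j hj hjn => ?_,
    fun k k' hk hkn hk' hk'n hne => hf.injective.ne (hαα k k' hk hkn hk' hk'n hne),
    fun j j' hj hjn hj' hj'n hne => hf.injective.ne (hββ j j' hj hjn hj' hj'n hne),
    fun k j hk hkn hj hjn => hf.injective.ne (hαβ k j hk hkn hj hjn),
    fun j hj hjn => ?_, ?_, fun j hj hjn => ?_, ?_⟩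
  · exact ⟨hpos (hα k hk hkn).1, hf.monotone (hα k hk hkn).2⟩
  · exact ⟨hpos (hβ j hj hjn).1, hf.monotone (hβ j hj hjn).2⟩
  · simpa only [Function.comp_apply, map_add] using hf (hlt j hj hjn)
  · simpa only [Function.comp_apply, map_add] using hf hltn
  · simp only [Function.comp_apply, ← map_add, hsum j hj hjn]
  · simp only [Function.comp_apply, ← map_add, hsumn]

def oddCycleVertexLabel (n k : ℕ) : ℕ := 4 * n + 2 * k

def oddCycleEdgeLabel (n j : ℕ) : ℕ := if j = n then 2 * n - 1 else 4 * n - 4 * j - 1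

theorem isFuzzyMagicCycleLabeling_oddCycle {n : ℕ} (hodd : Odd n) :
    IsFuzzyMagicCycleLabeling n (16 * n) (12 * n + 1)
      (oddCycleVertexLabel n) (oddCycleEdgeLabel n) := by
  obtain ⟨t, rfl⟩ := hodd
  unfold IsFuzzyMagicCycleLabeling oddCycleVertexLabel oddCycleEdgeLabel
  refine ⟨by omega, by omega, ?_, ?_, ?_, ?_, ?_, ?_, ?_, ?_, ?_⟩ <;> intros <;> (try split_ifs) <;> omega

theorem odd_cycle_is_fuzzy_magic_general (n : ℕ) (hodd : Odd n) :
    ∃ (m : ℝ) (α β : ℕ → ℝ),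
      0 < m ∧ m ≤ 1 ∧
      (∀ k, 1 ≤ k → k ≤ n → 0 < α k ∧ α k ≤ 1) ∧
      (∀ j, 1 ≤ j → j ≤ n → 0 < β j ∧ β j ≤ 1) ∧
      (∀ k k', 1 ≤ k → k ≤ n → 1 ≤ k' → k' ≤ n → k ≠ k' → α k ≠ α k') ∧
      (∀ j j', 1 ≤ j → j ≤ n → 1 ≤ j' → j' ≤ n → j ≠ j' → β j ≠ β j') ∧
      (∀ k j, 1 ≤ k → k ≤ n → 1 ≤ j → j ≤ n → α k ≠ β j) ∧
      (∀ j, 1 ≤ j → j ≤ n - 1 → β j < α j + α (j + 1)) ∧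
      (β n < α n + α 1) ∧
      (∀ j, 1 ≤ j → j ≤ n - 1 → α j + β j + α (j + 1) = m) ∧
      (α n + β n + α 1 = m) := by
  have hD : (0 : ℝ) < 16 * n := by have := hodd.pos; positivity
  let rescale : ℕ →+ ℝ := (AddMonoidHom.mulRight (16 * n : ℝ)⁻¹).comp (Nat.castAddMonoidHom ℝ)
  have hrescale : StrictMono rescale := fun a b hab => by
    simpa [rescale] using mul_lt_mul_of_pos_right (Nat.cast_lt.mpr hab) (inv_pos.mpr hD)
  have htop : rescale (16 * n) = 1 := by simpa [rescale] using mul_inv_cancel₀ hD.ne'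
  have h := (isFuzzyMagicCycleLabeling_oddCycle hodd).map rescale hrescale
  rw [htop] at h
  exact ⟨_, _, _, h⟩

/-- For every odd integer `n ≥ 3`, the cycle `C_n` with vertices `v_1, …, v_n`,
edges `v_j v_{j+1}` (`1 ≤ j ≤ n−1`) and the edge `v_n v_1`, admits a fuzzy magic
labeling: there exist `m ∈ (0,1]` and labels `α, β` with values in `(0,1]`, all `2n`
values pairwise distinct, with `β j < α j + α (j+1)` for `1 ≤ j ≤ n−1`,
`β n < α n + α 1`, and the magic sum equal to `m` on every edge. -/
theorem odd_cycle_is_fuzzy_magic (n : ℕ) (hn : 3 ≤ n) (hodd : Odd n) :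
    ∃ (m : ℝ) (α β : ℕ → ℝ),
      0 < m ∧ m ≤ 1 ∧
      (∀ k, 1 ≤ k → k ≤ n → 0 < α k ∧ α k ≤ 1) ∧
      (∀ j, 1 ≤ j → j ≤ n → 0 < β j ∧ β j ≤ 1) ∧
      (∀ k k', 1 ≤ k → k ≤ n → 1 ≤ k' → k' ≤ n → k ≠ k' → α k ≠ α k') ∧
      (∀ j j', 1 ≤ j → j ≤ n → 1 ≤ j' → j' ≤ n → j ≠ j' → β j ≠ β j') ∧
      (∀ k j, 1 ≤ k → k ≤ n → 1 ≤ j → j ≤ n → α k ≠ β j) ∧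
      (∀ j, 1 ≤ j → j ≤ n - 1 → β j < α j + α (j + 1)) ∧
      (β n < α n + α 1) ∧
      (∀ j, 1 ≤ j → j ≤ n - 1 → α j + β j + α (j + 1) = m) ∧
      (α n + β n + α 1 = m) :=
  odd_cycle_is_fuzzy_magic_general n hodd
end

section
/- Let n ≥ 1 be an odd integer and d > 0 a real number. Define α(k) = (2n + 2 − (k+1)/2)·d when k is odd and α(k) = ((3n+3)/2 − k/2)·d when k is even, for 1 ≤ k ≤ n+1, and define β(j) = j·d for 1 ≤ j ≤ n. Then the 2n+1 real numbers α(1), …, α(n+1), β(1), …, β(n) are pairwise distinct. -/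
/-- Distinctness of the explicit fuzzy magic labeling of the odd path `P_n`:
with `α k = (2n + 2 − (k+1)/2)·d` for `k` odd, `α k = ((3n+3)/2 − k/2)·d` for `k`
even (`1 ≤ k ≤ n+1`), and `β j = j·d` (`1 ≤ j ≤ n`), the `2n+1` values
`α 1, …, α (n+1), β 1, …, β n` are pairwise distinct. -/
theorem path_labeling_distinct (n : ℕ) (hn : 1 ≤ n) (hodd : Odd n)
    (d : ℝ) (hd : 0 < d) (α β : ℕ → ℝ)
    (hαodd : ∀ k, 1 ≤ k → k ≤ n + 1 → Odd k →
      α k = (2 * n + 2 - (k + 1) / 2) * d)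
    (hαeven : ∀ k, 1 ≤ k → k ≤ n + 1 → Even k →
      α k = ((3 * n + 3) / 2 - k / 2) * d)
    (hβ : ∀ j, 1 ≤ j → j ≤ n → β j = j * d) :
    (∀ k k', 1 ≤ k → k ≤ n + 1 → 1 ≤ k' → k' ≤ n + 1 → k ≠ k' → α k ≠ α k') ∧
    (∀ j j', 1 ≤ j → j ≤ n → 1 ≤ j' → j' ≤ n → j ≠ j' → β j ≠ β j') ∧
    (∀ k j, 1 ≤ k → k ≤ n + 1 → 1 ≤ j → j ≤ n → α k ≠ β j) := by
  have hd' : d ≠ 0 := ne_of_gt hd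
  -- an odd k with k ≤ n+1 satisfies k ≤ n
  have hkle : ∀ k, k ≤ n + 1 → Odd k → k ≤ n := by
    intro k hk hko
    rcases Nat.lt_or_ge k (n + 1) with h | h
    · omega
    · exfalso
      have : k = n + 1 := le_antisymm hk h
      subst this
      have := hodd.add_one
      exact (Nat.not_odd_iff_even.mpr this) hko
  -- an even k with 1 ≤ k satisfies 2 ≤ k
  have hkge : ∀ k, 1 ≤ k → Even k → 2 ≤ k := by
    intro k hk hke
    rcases Nat.even_iff.mp hke with h
    omega
  refine ⟨?_, ?_, ?_⟩
  · intro k k' hk1 hk2 hk1' hk2' hne heq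
    rcases Nat.even_or_odd k with hke | hko <;> rcases Nat.even_or_odd k' with hke' | hko'
    · rw [hαeven k hk1 hk2 hke, hαeven k' hk1' hk2' hke'] at heq
      have h := mul_right_cancel₀ hd' heq
      have : (k : ℝ) = (k' : ℝ) := by linarith
      exact hne (by exact_mod_cast this)
    · rw [hαeven k hk1 hk2 hke, hαodd k' hk1' hk2' hko'] at heq
      have h := mul_right_cancel₀ hd' heq
      have h1 : k' ≤ n := hkle k' hk2' hko'
      have h2 : 2 ≤ k := hkge k hk1 hke
      have h1' : (k' : ℝ) ≤ n := by exact_mod_cast h1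
      have h2' : (2 : ℝ) ≤ k := by exact_mod_cast h2
      have hn' : (1 : ℝ) ≤ n := by exact_mod_cast hn
      linarith
    · rw [hαodd k hk1 hk2 hko, hαeven k' hk1' hk2' hke'] at heq
      have h := mul_right_cancel₀ hd' heq
      have h1 : k ≤ n := hkle k hk2 hko
      have h2 : 2 ≤ k' := hkge k' hk1' hke'
      have h1' : (k : ℝ) ≤ n := by exact_mod_cast h1
      have h2' : (2 : ℝ) ≤ k' := by exact_mod_cast h2
      linarith
    · rw [hαodd k hk1 hk2 hko, hαodd k' hk1' hk2' hko'] at heq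
      have h := mul_right_cancel₀ hd' heq
      have : (k : ℝ) = (k' : ℝ) := by linarith
      exact hne (by exact_mod_cast this)
  · intro j j' hj1 hj2 hj1' hj2' hne heq
    rw [hβ j hj1 hj2, hβ j' hj1' hj2'] at heq
    have h := mul_right_cancel₀ hd' heq
    exact hne (by exact_mod_cast h)
  · intro k j hk1 hk2 hj1 hj2 heq
    have hjn : (j : ℝ) ≤ n := by exact_mod_cast hj2
    have hkn1 : (k : ℝ) ≤ n + 1 := by exact_mod_cast hk2
    rw [hβ j hj1 hj2] at heq
    rcases Nat.even_or_odd k with hke | hko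
    · rw [hαeven k hk1 hk2 hke] at heq
      have h := mul_right_cancel₀ hd' heq
      linarith
    · rw [hαodd k hk1 hk2 hko] at heq
      have h := mul_right_cancel₀ hd' heq
      have hn' : (1 : ℝ) ≤ n := by exact_mod_cast hn
      linarith
end

section
/- Let n ≥ 1 be an odd integer and d > 0 a real number. Define α(k) = (2n + 2 − (k+1)/2)·d when k is odd and α(k) = ((3n+3)/2 − k/2)·d when k is even, for 1 ≤ k ≤ n+1, and define β(j) = j·d for 1 ≤ j ≤ n. Then for every 1 ≤ j ≤ n, β(j) < α(j) + α(j+1). -/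
/-- Fuzzy-graph edge condition for the explicit labeling of the odd path `P_n`:
with `α k = (2n + 2 − (k+1)/2)·d` for `k` odd, `α k = ((3n+3)/2 − k/2)·d` for `k`
even (`1 ≤ k ≤ n+1`), and `β j = j·d` (`1 ≤ j ≤ n`), every edge satisfies
`β j < α j + α (j+1)`. -/
theorem path_labeling_edge_lt (n : ℕ) (hn : 1 ≤ n) (hodd : Odd n)
    (d : ℝ) (hd : 0 < d) (α β : ℕ → ℝ)
    (hαodd : ∀ k, 1 ≤ k → k ≤ n + 1 → Odd k →
      α k = (2 * n + 2 - (k + 1) / 2) * d)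
    (hαeven : ∀ k, 1 ≤ k → k ≤ n + 1 → Even k →
      α k = ((3 * n + 3) / 2 - k / 2) * d)
    (hβ : ∀ j, 1 ≤ j → j ≤ n → β j = j * d) :
    ∀ j, 1 ≤ j → j ≤ n → β j < α j + α (j + 1) := by
  intro j h1 h2
  have hjle : (j : ℝ) ≤ n := by exact_mod_cast h2
  have hn1 : (1 : ℝ) ≤ n := by exact_mod_cast hn
  rcases Nat.even_or_odd j with he | ho
  · rw [hβ j h1 h2, hαeven j h1 (le_trans h2 (Nat.le_succ n)) he,
      hαodd (j + 1) (by omega) (by omega) he.add_one]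
    push_cast; nlinarith
  · rw [hβ j h1 h2, hαodd j h1 (le_trans h2 (Nat.le_succ n)) ho,
      hαeven (j + 1) (by omega) (by omega) ho.add_one]
    push_cast; nlinarith
end

section
/- Let n ≥ 3 be an odd integer and d > 0 a real number. For the cycle C_n, define α(k) = ((3n + 2 − k)/2)·d when k is odd and α(k) = (2n + 1 − k/2)·d when k is even, for 1 ≤ k ≤ n, and define β(j) = j·d for 1 ≤ j ≤ n, where β(j) labels the edge v_j v_{j+1} for 1 ≤ j ≤ n−1 and β(n) labels the edge v_n v_1. Then α(j) + β(j) + α(j+1) = ((7n+3)/2)·d for every 1 ≤ j ≤ n−1, and also α(n) + β(n) + α(1) = ((7n+3)/2)·d. -/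
/-- Magic-sum property of the explicit fuzzy magic labeling of the odd cycle `C_n`:
with `α k = ((3n + 2 − k)/2)·d` for `k` odd, `α k = (2n + 1 − k/2)·d` for `k` even
(`1 ≤ k ≤ n`), and `β j = j·d` (`1 ≤ j ≤ n`), every edge `v_j v_{j+1}`
(`1 ≤ j ≤ n−1`) satisfies `α j + β j + α (j+1) = ((7n+3)/2)·d`, and the closing
edge `v_n v_1` satisfies `α n + β n + α 1 = ((7n+3)/2)·d`. -/
theorem cycle_labeling_magic_sum (n : ℕ) (hn : 3 ≤ n) (hodd : Odd n)
    (d : ℝ) (hd : 0 < d) (α β : ℕ → ℝ)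
    (hαodd : ∀ k, 1 ≤ k → k ≤ n → Odd k →
      α k = ((3 * n + 2 - k) / 2) * d)
    (hαeven : ∀ k, 1 ≤ k → k ≤ n → Even k →
      α k = (2 * n + 1 - k / 2) * d)
    (hβ : ∀ j, 1 ≤ j → j ≤ n → β j = j * d) :
    (∀ j, 1 ≤ j → j ≤ n - 1 → α j + β j + α (j + 1) = ((7 * n + 3) / 2) * d) ∧
    α n + β n + α 1 = ((7 * n + 3) / 2) * d := by
  constructor
  · intro j hj1 hj2
    have hjn : j ≤ n := by omega
    have hjn1 : j + 1 ≤ n := by omega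
    rw [hβ j hj1 hjn]
    rcases Nat.even_or_odd j with hje | hjo
    · rw [hαeven j hj1 hjn hje, hαodd (j+1) (by omega) hjn1 (Even.add_one hje)]
      push_cast
      ring
    · rw [hαodd j hj1 hjn hjo, hαeven (j+1) (by omega) hjn1 (Odd.add_one hjo)]
      push_cast
      ring
  · rw [hβ n (by omega) le_rfl, hαodd n (by omega) le_rfl hodd,
      hαodd 1 le_rfl (by omega) odd_one]
    push_cast
    ring
end

section
/- Let n ≥ 3 be an odd integer and d > 0 a real number. For the cycle C_n, define α(k) = ((3n + 2 − k)/2)·d when k is odd and α(k) = (2n + 1 − k/2)·d when k is even, for 1 ≤ k ≤ n, and define β(j) = j·d for 1 ≤ j ≤ n. Then the 2n real numbers α(1), …, α(n), β(1), …, β(n) are pairwise distinct. -/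
/-- Distinctness of the explicit fuzzy magic labeling of the odd cycle `C_n`:
with `α k = ((3n + 2 − k)/2)·d` for `k` odd, `α k = (2n + 1 − k/2)·d` for `k` even
(`1 ≤ k ≤ n`), and `β j = j·d` (`1 ≤ j ≤ n`), the `2n` values
`α 1, …, α n, β 1, …, β n` are pairwise distinct. -/
theorem cycle_labeling_distinct (n : ℕ) (hn : 3 ≤ n) (hodd : Odd n)
    (d : ℝ) (hd : 0 < d) (α β : ℕ → ℝ)
    (hαodd : ∀ k, 1 ≤ k → k ≤ n → Odd k →
      α k = ((3 * n + 2 - k) / 2) * d)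
    (hαeven : ∀ k, 1 ≤ k → k ≤ n → Even k →
      α k = (2 * n + 1 - k / 2) * d)
    (hβ : ∀ j, 1 ≤ j → j ≤ n → β j = j * d) :
    (∀ k k', 1 ≤ k → k ≤ n → 1 ≤ k' → k' ≤ n → k ≠ k' → α k ≠ α k') ∧
    (∀ j j', 1 ≤ j → j ≤ n → 1 ≤ j' → j' ≤ n → j ≠ j' → β j ≠ β j') ∧
    (∀ k j, 1 ≤ k → k ≤ n → 1 ≤ j → j ≤ n → α k ≠ β j) := by
  have hd' : d ≠ 0 := ne_of_gt hd
  obtain ⟨m, hm⟩ := hodd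
  refine ⟨?_, ?_, ?_⟩
  · intro k k' h1 h2 h1' h2' hne heq
    rcases Nat.even_or_odd k with hk | hk <;> rcases Nat.even_or_odd k' with hk' | hk'
    · rw [hαeven k h1 h2 hk, hαeven k' h1' h2' hk'] at heq
      have := mul_right_cancel₀ hd' heq
      have : (k : ℝ) = k' := by linarith
      exact hne (by exact_mod_cast this)
    · rw [hαeven k h1 h2 hk, hαodd k' h1' h2' hk'] at heq
      have := mul_right_cancel₀ hd' heq
      have hr : (k : ℝ) = n + k' := by linarith
      have : k = n + k' := by exact_mod_cast hr
      omega
    · rw [hαodd k h1 h2 hk, hαeven k' h1' h2' hk'] at heq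
      have := mul_right_cancel₀ hd' heq
      have hr : (k' : ℝ) = n + k := by linarith
      have : k' = n + k := by exact_mod_cast hr
      omega
    · rw [hαodd k h1 h2 hk, hαodd k' h1' h2' hk'] at heq
      have := mul_right_cancel₀ hd' heq
      have : (k : ℝ) = k' := by linarith
      exact hne (by exact_mod_cast this)
  · intro j j' h1 h2 h1' h2' hne heq
    rw [hβ j h1 h2, hβ j' h1' h2'] at heq
    have := mul_right_cancel₀ hd' heq
    exact hne (by exact_mod_cast this)
  · intro k j h1 h2 h1' h2' heq
    rw [hβ j h1' h2'] at heq
    rcases Nat.even_or_odd k with hk | hk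
    · rw [hαeven k h1 h2 hk] at heq
      have := mul_right_cancel₀ hd' heq
      have hr : (k : ℝ) + 2 * j = 4 * n + 2 := by linarith
      have : k + 2 * j = 4 * n + 2 := by exact_mod_cast hr
      omega
    · rw [hαodd k h1 h2 hk] at heq
      have := mul_right_cancel₀ hd' heq
      have hr : (k : ℝ) + 2 * j = 3 * n + 2 := by linarith
      have : k + 2 * j = 3 * n + 2 := by exact_mod_cast hr
      omega
end

section
/- Let n ≥ 3 be an odd integer and d > 0 a real number. For the cycle C_n, define α(k) = ((3n + 2 − k)/2)·d when k is odd and α(k) = (2n + 1 − k/2)·d when k is even, for 1 ≤ k ≤ n, and define β(j) = j·d for 1 ≤ j ≤ n. Then β(j) < α(j) + α(j+1) for every 1 ≤ j ≤ n−1, and β(n) < α(n) + α(1). -/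
/-- Fuzzy-graph edge condition for the explicit labeling of the odd cycle `C_n`:
with `α k = ((3n + 2 − k)/2)·d` for `k` odd, `α k = (2n + 1 − k/2)·d` for `k` even
(`1 ≤ k ≤ n`), and `β j = j·d` (`1 ≤ j ≤ n`), `β j < α j + α (j+1)` for every
`1 ≤ j ≤ n−1`, and `β n < α n + α 1`. -/
theorem cycle_labeling_edge_lt (n : ℕ) (hn : 3 ≤ n) (hodd : Odd n)
    (d : ℝ) (hd : 0 < d) (α β : ℕ → ℝ)
    (hαodd : ∀ k, 1 ≤ k → k ≤ n → Odd k →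
      α k = ((3 * n + 2 - k) / 2) * d)
    (hαeven : ∀ k, 1 ≤ k → k ≤ n → Even k →
      α k = (2 * n + 1 - k / 2) * d)
    (hβ : ∀ j, 1 ≤ j → j ≤ n → β j = j * d) :
    (∀ j, 1 ≤ j → j ≤ n - 1 → β j < α j + α (j + 1)) ∧
    β n < α n + α 1 := by
  have hn' : (3:ℝ) ≤ (n:ℝ) := by exact_mod_cast hn
  constructor
  · intro j h1 h2
    have hjn : j + 1 ≤ n := by omega
    have hjn' : j ≤ n := by omega
    have hjr : (j:ℝ) ≤ (n:ℝ) := by exact_mod_cast hjn'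
    rcases Nat.even_or_odd j with he | ho
    · rw [hβ j h1 hjn', hαeven j h1 hjn' he,
        hαodd (j+1) (by omega) hjn (he.add_one)]
      push_cast
      nlinarith [hjr, hd, hn']
    · rw [hβ j h1 hjn', hαodd j h1 hjn' ho,
        hαeven (j+1) (by omega) hjn (ho.add_one)]
      push_cast
      nlinarith [hjr, hd, hn']
  · rw [hβ n (by omega) le_rfl, hαodd n (by omega) le_rfl hodd,
      hαodd 1 (by omega) (by omega) (by norm_num)]
    push_cast
    nlinarith [hd, hn']
end
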